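/- For p ≥ 1, the map g_ε from [0,T] × L^p(ℝ) to L^p(ℝ) defined by g_ε(τ,U)(x) = ε^{-1} e^{x⁻}(w(τ,x) − U(x))⁺ is Hölder continuous in τ with exponent (p+1)/(2p): there is C₀ > 0 such that ‖g_ε(τ₁,U) − g_ε(τ₂,U)‖_{L^p} ≤ ε^{-1} C₀ |τ₁ − τ₂|^{(p+1)/(2p)} for all U ∈ L^p(ℝ) and τ₁, τ₂ ∈ (0,T]. -/

import Mathlib

/-!
Differentiating the explicit put formula in `τ` and using `e^{rτ+x} φ(d₁) = φ(d₂)` gives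
`∂_τ w = r K e^{rτ} ((1 - eˣ)⁺ + eˣ N(-d₁)) - K σ φ(d₂) / (2√τ)`.
After multiplication by `e^{x⁻}`, the first term is dominated, uniformly in `τ ≤ T`, by a bounded
integrable function of `x` (for `x > 0` through the Gaussian tail `N(-d₁) ≤ e^{-d₁²/2}`); the second
has `x`-integral `K σ² / 2` and supremum `O(τ^{-1/2})`. Integrating in time,
`F = e^{x⁻} |w(τ₁) - w(τ₂)|` is therefore dominated by a function of supremum `O(√Δ)` and
integral `O(Δ)`, where `Δ = |τ₁ - τ₂|`.
As `(· - U)⁺` is 1-Lipschitz, the penalty increment is at most `ε⁻¹ F`, and the interpolation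
`∫ F^p ≤ ‖F‖_∞^{p-1} ‖F‖₁` yields the exponent `(p - 1) / (2p) + 1 / p = (p + 1) / (2p)`.
-/

open MeasureTheory Real

noncomputable def stdNormalCDF (d : ℝ) : ℝ :=
  ∫ ξ in Set.Iio d, Real.exp (-ξ ^ 2 / 2) / Real.sqrt (2 * Real.pi)

noncomputable def dOne (σ r τ x : ℝ) : ℝ :=
  (x + (r + σ ^ 2 / 2) * τ) / (σ * Real.sqrt τ)

noncomputable def dTwo (σ r τ x : ℝ) : ℝ :=
  dOne σ r τ x - σ * Real.sqrt τ

/-- `w(τ,x) = e^{rτ}Φ(Ke^x) − u_BS(τ,x)` for a put option, written explicitly as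
`e^{rτ} K (1 − e^x)⁺ − K N(−d₂) + K e^{rτ+x} N(−d₁)`. -/
noncomputable def wPut (σ r K τ x : ℝ) : ℝ :=
  Real.exp (r * τ) * max (1 - Real.exp x) 0 * K -
    K * stdNormalCDF (-(dTwo σ r τ x)) +
    K * Real.exp (r * τ + x) * stdNormalCDF (-(dOne σ r τ x))

/-- The penalty operator `g_ε(τ,U)(x) = ε⁻¹ e^{x⁻}(w(τ,x) − U(x))⁺`. -/
noncomputable def penaltyOp (σ r K ε τ : ℝ) (U : ℝ → ℝ) (x : ℝ) : ℝ :=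
  ε⁻¹ * Real.exp (min x 0) * max (wPut σ r K τ x - U x) 0

open Set Filter ProbabilityTheory

noncomputable def stdNormalPDF (ξ : ℝ) : ℝ := exp (-ξ ^ 2 / 2) / √(2 * π)

lemma stdNormalPDF_eq_gaussianPDFReal : stdNormalPDF = gaussianPDFReal 0 1 := by
  ext ξ
  simp [stdNormalPDF, gaussianPDFReal, div_eq_inv_mul]

lemma stdNormalPDF_nonneg (ξ : ℝ) : 0 ≤ stdNormalPDF ξ := by
  rw [stdNormalPDF_eq_gaussianPDFReal]; exact gaussianPDFReal_nonneg _ _ _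

lemma stdNormalPDF_neg (ξ : ℝ) : stdNormalPDF (-ξ) = stdNormalPDF ξ := by simp [stdNormalPDF]

lemma stdNormalPDF_le (ξ : ℝ) : stdNormalPDF ξ ≤ (√(2 * π))⁻¹ := by
  rw [stdNormalPDF, div_eq_mul_inv]
  exact mul_le_of_le_one_left (by positivity) (exp_le_one_iff.2 (by nlinarith [sq_nonneg ξ]))

lemma continuous_stdNormalPDF : Continuous stdNormalPDF := by
  unfold stdNormalPDF; fun_prop

lemma integrable_stdNormalPDF : Integrable stdNormalPDF := by
  rw [stdNormalPDF_eq_gaussianPDFReal]; exact integrable_gaussianPDFReal _ _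

lemma integral_stdNormalPDF : ∫ ξ, stdNormalPDF ξ = 1 := by
  rw [stdNormalPDF_eq_gaussianPDFReal]; exact integral_gaussianPDFReal_eq_one _ one_ne_zero

lemma integrable_stdNormalPDF_add_div (c : ℝ) {s : ℝ} (hs : s ≠ 0) :
    Integrable (fun x ↦ stdNormalPDF ((x + c) / s)) := by
  simpa only [div_eq_inv_mul] using
    (integrable_stdNormalPDF.comp_mul_left' (inv_ne_zero hs)).comp_add_right c

lemma integral_stdNormalPDF_add_div (c : ℝ) {s : ℝ} (hs : 0 < s) :
    ∫ x, stdNormalPDF ((x + c) / s) = s := by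
  rw [integral_add_right_eq_self (fun y ↦ stdNormalPDF (y / s)) c,
    Measure.integral_comp_div stdNormalPDF s, integral_stdNormalPDF, abs_of_pos hs, smul_eq_mul,
    mul_one]

lemma stdNormalCDF_eq_integral_Iic (d : ℝ) : stdNormalCDF d = ∫ ξ in Iic d, stdNormalPDF ξ :=
  setIntegral_congr_set Iio_ae_eq_Iic

lemma stdNormalCDF_nonneg (d : ℝ) : 0 ≤ stdNormalCDF d :=
  setIntegral_nonneg measurableSet_Iio fun ξ _ ↦ stdNormalPDF_nonneg ξ

lemma stdNormalCDF_le_one (d : ℝ) : stdNormalCDF d ≤ 1 := by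
  rw [← integral_stdNormalPDF]
  exact setIntegral_le_integral integrable_stdNormalPDF (Eventually.of_forall stdNormalPDF_nonneg)

lemma hasDerivAt_stdNormalCDF (d : ℝ) : HasDerivAt stdNormalCDF (stdNormalPDF d) d := by
  have hsplit : stdNormalCDF = fun u ↦ stdNormalCDF 0 + ∫ ξ in (0 : ℝ)..u, stdNormalPDF ξ := by
    ext u
    rw [stdNormalCDF_eq_integral_Iic, stdNormalCDF_eq_integral_Iic,
      ← intervalIntegral.integral_Iic_sub_Iic integrable_stdNormalPDF.integrableOn
        integrable_stdNormalPDF.integrableOn]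
    ring
  rw [hsplit]
  exact (intervalIntegral.integral_hasDerivAt_right integrable_stdNormalPDF.intervalIntegrable
    (continuous_stdNormalPDF.stronglyMeasurableAtFilter _ _)
    continuous_stdNormalPDF.continuousAt).const_add _

lemma stdNormalCDF_neg_le {d : ℝ} (hd : 0 ≤ d) : stdNormalCDF (-d) ≤ exp (-d ^ 2 / 2) := by
  have hshift : Integrable fun ξ ↦ exp (-d ^ 2 / 2) * stdNormalPDF (ξ + d) :=
    (integrable_stdNormalPDF.comp_add_right d).const_mul _
  calc stdNormalCDF (-d) ≤ ∫ ξ in Iio (-d), exp (-d ^ 2 / 2) * stdNormalPDF (ξ + d) := by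
        refine setIntegral_mono_on integrable_stdNormalPDF.integrableOn hshift.integrableOn
          measurableSet_Iio fun ξ hξ ↦ ?_
        simp only [stdNormalPDF]
        -- `φ(ξ) ≤ e^{-d²/2} φ(ξ + d)` because `d (ξ + d) ≤ 0` on `ξ < -d`
        rw [mul_div_assoc', ← exp_add]
        gcongr
        nlinarith [mem_Iio.1 hξ]
    _ ≤ ∫ ξ, exp (-d ^ 2 / 2) * stdNormalPDF (ξ + d) :=
        setIntegral_le_integral hshift
          (Eventually.of_forall fun ξ ↦ mul_nonneg (exp_nonneg _) (stdNormalPDF_nonneg _))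
    _ = exp (-d ^ 2 / 2) := by
        rw [integral_const_mul, integral_add_right_eq_self stdNormalPDF d, integral_stdNormalPDF,
          mul_one]

section BlackScholes

variable {σ r K τ x : ℝ}

lemma dOne_mul (hσ : σ ≠ 0) (hτ : 0 < τ) :
    dOne σ r τ x * (σ * √τ) = x + (r + σ ^ 2 / 2) * τ :=
  div_mul_cancel₀ _ (mul_ne_zero hσ (sqrt_pos.2 hτ).ne')

lemma dTwo_eq (hσ : σ ≠ 0) (hτ : 0 < τ) :
    dTwo σ r τ x = (x + (r - σ ^ 2 / 2) * τ) / (σ * √τ) := by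
  have hs : σ * √τ ≠ 0 := mul_ne_zero hσ (sqrt_pos.2 hτ).ne'
  rw [eq_div_iff hs, dTwo, sub_mul, dOne_mul hσ hτ]
  linear_combination (-σ ^ 2) * sq_sqrt hτ.le

lemma exp_mul_stdNormalPDF_dOne (hσ : σ ≠ 0) (hτ : 0 < τ) :
    exp (r * τ + x) * stdNormalPDF (dOne σ r τ x) = stdNormalPDF (dTwo σ r τ x) := by
  simp only [stdNormalPDF]
  rw [mul_div_assoc', ← exp_add, dTwo]
  congr 2
  linear_combination (-1 : ℝ) * dOne_mul (r := r) (x := x) hσ hτ + (σ ^ 2 / 2) * sq_sqrt hτ.le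

lemma differentiableAt_dOne (hσ : σ ≠ 0) (hτ : 0 < τ) :
    DifferentiableAt ℝ (fun t ↦ dOne σ r t x) τ := by
  unfold dOne
  fun_prop (disch := simp [hσ, hτ.ne', (sqrt_pos.2 hτ).ne'])

noncomputable def driftRate (σ r K τ x : ℝ) : ℝ :=
  r * K * exp (r * τ) * (max (1 - exp x) 0 + exp x * stdNormalCDF (-dOne σ r τ x))

noncomputable def diffusionRate (σ r K τ x : ℝ) : ℝ :=
  K * σ / (2 * √τ) * stdNormalPDF (dTwo σ r τ x)

lemma hasDerivAt_wPut (hσ : σ ≠ 0) (hτ : 0 < τ) :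
    HasDerivAt (fun t ↦ wPut σ r K t x) (driftRate σ r K τ x - diffusionRate σ r K τ x) τ := by
  have hd₁ := (differentiableAt_dOne (r := r) (x := x) hσ hτ).hasDerivAt
  set d₁' := deriv (fun t ↦ dOne σ r t x) τ
  have hd₂ : HasDerivAt (fun t ↦ dTwo σ r t x) (d₁' - σ * (1 / (2 * √τ))) τ :=
    hd₁.sub ((hasDerivAt_sqrt hτ.ne').const_mul σ)
  have hexp : HasDerivAt (fun t ↦ exp (r * t)) (exp (r * τ) * r) τ := by
    simpa using ((hasDerivAt_id τ).const_mul r).exp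
  have hexp' : HasDerivAt (fun t ↦ exp (r * t + x)) (exp (r * τ + x) * r) τ := by
    simpa using (((hasDerivAt_id τ).const_mul r).add_const x).exp
  have hw := ((hexp.mul_const (max (1 - exp x) 0)).mul_const K).sub
    ((((hasDerivAt_stdNormalCDF _).comp τ hd₂.neg)).const_mul K) |>.add
    ((hexp'.const_mul K).mul ((hasDerivAt_stdNormalCDF _).comp τ hd₁.neg))
  refine hw.congr_deriv ?_
  simp only [Pi.neg_apply, Function.comp_apply]
  rw [driftRate, diffusionRate, stdNormalPDF_neg, stdNormalPDF_neg,
    ← exp_mul_stdNormalPDF_dOne (r := r) (x := x) hσ hτ, exp_add]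
  field_simp
  ring

end BlackScholes

noncomputable def driftWeight (σ T x : ℝ) : ℝ := exp (x - max x 0 ^ 2 / (2 * σ ^ 2 * T))

section Bounds

variable {σ r K T τ x : ℝ}

lemma driftWeight_le (hσ : σ ≠ 0) (hT : 0 < T) : driftWeight σ T x ≤ exp (σ ^ 2 * T / 2) := by
  have hs : 0 < σ ^ 2 * T := by positivity
  refine exp_le_exp.2 ?_
  rcases le_or_gt x 0 with hx | hx
  · rw [max_eq_right hx, zero_pow two_ne_zero, zero_div, sub_zero]; linarith
  · rw [max_eq_left hx.le, ← sub_nonneg, show 2 * σ ^ 2 * T = 2 * (σ ^ 2 * T) by ring]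
    have : σ ^ 2 * T / 2 - (x - x ^ 2 / (2 * (σ ^ 2 * T))) =
        (x - σ ^ 2 * T) ^ 2 / (2 * (σ ^ 2 * T)) := by
      field_simp; ring
    rw [this]; positivity

lemma integrable_driftWeight (hσ : σ ≠ 0) (hT : 0 < T) : Integrable (driftWeight σ T) := by
  set s := σ ^ 2 * T
  have hs : 0 < s := by positivity
  rw [← integrableOn_univ, ← Iic_union_Ioi (a := (0 : ℝ))]
  refine IntegrableOn.union ((integrableOn_exp_Iic 0).congr_fun (fun x hx ↦ ?_) measurableSet_Iic)
    (((integrable_exp_neg_mul_sq (b := 1 / (2 * s)) (by positivity)).comp_sub_right s |>.const_mul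
      (exp (s / 2))).integrableOn.congr_fun (fun x hx ↦ ?_) measurableSet_Ioi)
  · rw [driftWeight, max_eq_right (mem_Iic.1 hx)]; simp
  · dsimp only
    rw [driftWeight, max_eq_left (mem_Ioi.1 hx).le, ← exp_add]
    congr 1
    field_simp
    ring

lemma exp_mul_stdNormalCDF_neg_dOne_le (hσ : 0 < σ) (hr : 0 ≤ r) (hτ : 0 < τ) (hτT : τ ≤ T)
    (hx : 0 < x) :
    exp x * stdNormalCDF (-dOne σ r τ x) ≤ exp (x - x ^ 2 / (2 * σ ^ 2 * T)) := by
  have hd : 0 ≤ dOne σ r τ x := div_nonneg (by positivity) (by positivity)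
  have hsq : x ^ 2 / (σ ^ 2 * T) ≤ dOne σ r τ x ^ 2 := calc
    x ^ 2 / (σ ^ 2 * T) ≤ x ^ 2 / (σ ^ 2 * τ) := by gcongr
    _ ≤ dOne σ r τ x ^ 2 := by
      rw [div_le_iff₀ (by positivity), show dOne σ r τ x ^ 2 * (σ ^ 2 * τ) =
        (dOne σ r τ x * (σ * √τ)) ^ 2 by rw [mul_pow, mul_pow, sq_sqrt hτ.le], dOne_mul hσ.ne' hτ]
      gcongr
      nlinarith
  calc exp x * stdNormalCDF (-dOne σ r τ x) ≤ exp x * exp (-dOne σ r τ x ^ 2 / 2) := by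
        gcongr; exact stdNormalCDF_neg_le hd
    _ ≤ exp (x - x ^ 2 / (2 * σ ^ 2 * T)) := by
        rw [← exp_add]; gcongr
        rw [show x ^ 2 / (2 * σ ^ 2 * T) = x ^ 2 / (σ ^ 2 * T) / 2 by ring]
        linarith

lemma exp_min_mul_le_driftWeight (hσ : 0 < σ) (hr : 0 ≤ r) (hτ : 0 < τ) (hτT : τ ≤ T) :
    exp (min x 0) * (max (1 - exp x) 0 + exp x * stdNormalCDF (-dOne σ r τ x)) ≤
      driftWeight σ T x := by
  rcases le_or_gt x 0 with hx | hx
  · rw [driftWeight, min_eq_left hx, max_eq_right hx, max_eq_left (by simpa using hx)]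
    rw [zero_pow two_ne_zero, zero_div, sub_zero]
    refine mul_le_of_le_one_right (exp_nonneg x) ?_
    nlinarith [stdNormalCDF_le_one (-dOne σ r τ x), exp_pos x]
  · rw [driftWeight, min_eq_right hx.le, max_eq_right (by simpa using hx.le),
      max_eq_left hx.le, exp_zero, one_mul, zero_add]
    exact exp_mul_stdNormalCDF_neg_dOne_le hσ hr hτ hτT hx

lemma diffusionRate_nonneg (hσ : 0 ≤ σ) (hK : 0 ≤ K) : 0 ≤ diffusionRate σ r K τ x :=
  mul_nonneg (by positivity) (stdNormalPDF_nonneg _)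

lemma exp_min_mul_abs_driftRate_sub_diffusionRate_le (hσ : 0 < σ) (hr : 0 ≤ r) (hK : 0 ≤ K)
    (hτ : 0 < τ) (hτT : τ ≤ T) :
    exp (min x 0) * |driftRate σ r K τ x - diffusionRate σ r K τ x| ≤
      r * K * exp (r * T) * driftWeight σ T x + diffusionRate σ r K τ x := by
  have hbracket : 0 ≤ max (1 - exp x) 0 + exp x * stdNormalCDF (-dOne σ r τ x) :=
    add_nonneg (le_max_right _ _) (mul_nonneg (exp_nonneg _) (stdNormalCDF_nonneg _))
  have hdrift₀ : 0 ≤ driftRate σ r K τ x := mul_nonneg (by positivity) hbracket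
  have hdiff₀ := diffusionRate_nonneg (r := r) (τ := τ) (x := x) hσ.le hK
  have hdrift : exp (min x 0) * driftRate σ r K τ x ≤ r * K * exp (r * T) * driftWeight σ T x := by
    rw [driftRate, mul_left_comm]
    exact mul_le_mul (by gcongr) (exp_min_mul_le_driftWeight hσ hr hτ hτT)
      (mul_nonneg (exp_nonneg _) hbracket) (by positivity)
  calc exp (min x 0) * |driftRate σ r K τ x - diffusionRate σ r K τ x|
      ≤ exp (min x 0) * (driftRate σ r K τ x + diffusionRate σ r K τ x) := by
        gcongr
        exact abs_sub_le_iff.2 ⟨by linarith, by linarith⟩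
    _ ≤ _ := by
        rw [mul_add]
        exact add_le_add hdrift (mul_le_of_le_one_left hdiff₀ (exp_le_one_iff.2 (min_le_right x 0)))

lemma diffusionRate_le (hσ : 0 ≤ σ) (hK : 0 ≤ K) (hτ : 0 < τ) :
    diffusionRate σ r K τ x ≤ K * σ / (2 * √(2 * π)) * (√τ)⁻¹ := by
  calc diffusionRate σ r K τ x ≤ K * σ / (2 * √τ) * (√(2 * π))⁻¹ := by
        unfold diffusionRate; gcongr; exact stdNormalPDF_le _
    _ = K * σ / (2 * √(2 * π)) * (√τ)⁻¹ := by ring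

lemma integrable_diffusionRate (hσ : σ ≠ 0) (hτ : 0 < τ) :
    Integrable (diffusionRate σ r K τ) := by
  unfold diffusionRate
  simp_rw [dTwo_eq hσ hτ]
  exact (integrable_stdNormalPDF_add_div _ (mul_ne_zero hσ (sqrt_pos.2 hτ).ne')).const_mul _

lemma integral_diffusionRate (hσ : 0 < σ) (hτ : 0 < τ) :
    ∫ x, diffusionRate σ r K τ x = K * σ ^ 2 / 2 := by
  unfold diffusionRate
  simp_rw [dTwo_eq hσ.ne' hτ]
  rw [integral_const_mul, integral_stdNormalPDF_add_div _ (by positivity)]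
  field_simp [(sqrt_pos.2 hτ).ne']

end Bounds

lemma abs_sub_le_integral_of_abs_deriv_le {f f' g : ℝ → ℝ} {a b : ℝ} (hab : a ≤ b)
    (hf : ∀ t ∈ Icc a b, HasDerivAt f (f' t) t) (hg : IntegrableOn g (Icc a b))
    (hf'g : ∀ t ∈ Icc a b, |f' t| ≤ g t) : |f b - f a| ≤ ∫ t in a..b, g t := by
  have hcont : ContinuousOn f (Icc a b) := fun t ht ↦ (hf t ht).continuousAt.continuousWithinAt
  refine abs_sub_le_iff.2 ⟨?_, ?_⟩
  · refine intervalIntegral.sub_le_integral_of_hasDeriv_right_of_le hab hcont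
      (fun t ht ↦ (hf t (Ioo_subset_Icc_self ht)).hasDerivWithinAt) hg fun t ht ↦ ?_
    exact (le_abs_self _).trans (hf'g t (Ioo_subset_Icc_self ht))
  · have := intervalIntegral.sub_le_integral_of_hasDeriv_right_of_le hab hcont.neg
      (fun t ht ↦ (hf t (Ioo_subset_Icc_self ht)).neg.hasDerivWithinAt) hg fun t ht ↦
        (neg_le_abs _).trans (hf'g t (Ioo_subset_Icc_self ht))
    simpa [neg_add_eq_sub] using this

lemma continuousOn_inv_sqrt : ContinuousOn (fun t ↦ (√t)⁻¹) (Ioi 0) :=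
  continuous_sqrt.continuousOn.inv₀ fun _ ht ↦ (sqrt_pos.2 ht).ne'

lemma integral_inv_sqrt {a b : ℝ} (ha : 0 < a) (hab : a ≤ b) :
    ∫ t in a..b, (√t)⁻¹ = 2 * (√b - √a) := by
  have hpos : ∀ t ∈ uIcc a b, 0 < t := fun t ht ↦ ha.trans_le (uIcc_of_le hab ▸ ht).1
  rw [intervalIntegral.integral_eq_sub_of_hasDerivAt (f := fun t ↦ 2 * √t)
    (fun t ht ↦ ((hasDerivAt_sqrt (hpos t ht).ne').const_mul 2).congr_deriv ?_)
    (continuousOn_inv_sqrt.mono hpos).intervalIntegrable]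
  · ring
  · have := (sqrt_pos.2 (hpos t ht)).ne'
    field_simp

lemma sqrt_sub_sqrt_le_sqrt_sub {a b : ℝ} (ha : 0 ≤ a) (hab : a ≤ b) : √b - √a ≤ √(b - a) := by
  rw [sub_le_iff_le_add, sqrt_le_iff]
  refine ⟨by positivity, ?_⟩
  nlinarith [sq_sqrt ha, sq_sqrt (sub_nonneg.2 hab), sqrt_nonneg a, sqrt_nonneg (b - a)]

section TimeIncrements

variable {σ r K T τ₁ τ₂ : ℝ}

lemma continuousOn_diffusionRate (hσ : σ ≠ 0) (x : ℝ) :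
    ContinuousOn (fun t ↦ diffusionRate σ r K t x) (Ioi 0) := by
  unfold diffusionRate dTwo dOne
  refine ContinuousOn.mul ?_ (continuous_stdNormalPDF.comp_continuousOn ?_) <;>
    fun_prop (disch := intros; simp_all [(sqrt_pos.2 _).ne'])

lemma measurable_diffusionRate : Measurable (Function.uncurry (diffusionRate σ r K)) := by
  unfold diffusionRate dTwo dOne
  have := continuous_stdNormalPDF.measurable
  fun_prop

lemma integrable_diffusionRate_prod (hσ : 0 < σ) (hK : 0 ≤ K) (h₂ : 0 < τ₂) :
    Integrable (Function.uncurry (diffusionRate σ r K))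
      ((volume.restrict (Ioc τ₂ τ₁)).prod volume) := by
  refine (integrable_prod_iff measurable_diffusionRate.aestronglyMeasurable).2 ⟨?_, ?_⟩
  · exact (ae_restrict_iff' measurableSet_Ioc).2 (Eventually.of_forall fun t ht ↦
      integrable_diffusionRate hσ.ne' (h₂.trans ht.1))
  · refine (integrable_const (K * σ ^ 2 / 2)).congr ((ae_restrict_iff' measurableSet_Ioc).2
      (Eventually.of_forall fun t ht ↦ ?_))
    have ht₀ : 0 < t := h₂.trans ht.1
    rw [← integral_diffusionRate (r := r) (K := K) hσ ht₀]
    exact integral_congr_ae (Eventually.of_forall fun x ↦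
      (Real.norm_of_nonneg (diffusionRate_nonneg hσ.le hK)).symm)

lemma integrable_integral_diffusionRate (hσ : 0 < σ) (hK : 0 ≤ K) (h₂ : 0 < τ₂) :
    Integrable fun x ↦ ∫ t in Ioc τ₂ τ₁, diffusionRate σ r K t x :=
  (integrable_diffusionRate_prod hσ hK h₂).integral_prod_right

lemma integral_integral_diffusionRate (hσ : 0 < σ) (hK : 0 ≤ K) (h₂ : 0 < τ₂)
    (h₂₁ : τ₂ ≤ τ₁) :
    ∫ x, ∫ t in Ioc τ₂ τ₁, diffusionRate σ r K t x = K * σ ^ 2 / 2 * (τ₁ - τ₂) := by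
  rw [← integral_integral_swap (integrable_diffusionRate_prod hσ hK h₂),
    setIntegral_congr_fun measurableSet_Ioc fun t ht ↦ integral_diffusionRate hσ (h₂.trans ht.1),
    setIntegral_const, Real.volume_real_Ioc_of_le h₂₁, smul_eq_mul, mul_comm]

lemma exp_min_mul_abs_wPut_sub_le (hσ : 0 < σ) (hr : 0 ≤ r) (hK : 0 ≤ K) (h₂ : 0 < τ₂)
    (h₂₁ : τ₂ ≤ τ₁) (h₁T : τ₁ ≤ T) (x : ℝ) :
    exp (min x 0) * |wPut σ r K τ₁ x - wPut σ r K τ₂ x| ≤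
      r * K * exp (r * T) * driftWeight σ T x * (τ₁ - τ₂) +
        ∫ t in Ioc τ₂ τ₁, diffusionRate σ r K t x := by
  have hpos : Icc τ₂ τ₁ ⊆ Ioi 0 := (Icc_subset_Ioi_iff h₂₁).2 h₂
  have hD := (continuousOn_diffusionRate (r := r) (K := K) hσ.ne' x).mono hpos
  have := abs_sub_le_integral_of_abs_deriv_le h₂₁
    (f := fun t ↦ exp (min x 0) * wPut σ r K t x)
    (g := fun t ↦ r * K * exp (r * T) * driftWeight σ T x + diffusionRate σ r K t x)
    (fun t ht ↦ (hasDerivAt_wPut hσ.ne' (hpos ht)).const_mul _)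
    (continuousOn_const.add hD).integrableOn_Icc fun t ht ↦ by
      rw [abs_mul, abs_of_pos (exp_pos _)]
      exact exp_min_mul_abs_driftRate_sub_diffusionRate_le hσ hr hK (hpos ht) (ht.2.trans h₁T)
  rwa [← mul_sub, abs_mul, abs_of_pos (exp_pos _), intervalIntegral.integral_add
    intervalIntegrable_const (hD.intervalIntegrable_of_Icc h₂₁), intervalIntegral.integral_const,
    intervalIntegral.integral_of_le h₂₁, smul_eq_mul, mul_comm (τ₁ - τ₂)] at this

lemma integral_diffusionRate_le (hσ : 0 < σ) (hK : 0 ≤ K) (h₂ : 0 < τ₂) (h₂₁ : τ₂ ≤ τ₁)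
    (x : ℝ) :
    ∫ t in Ioc τ₂ τ₁, diffusionRate σ r K t x ≤ K * σ / √(2 * π) * √(τ₁ - τ₂) := by
  have hpos : Icc τ₂ τ₁ ⊆ Ioi 0 := (Icc_subset_Ioi_iff h₂₁).2 h₂
  rw [← intervalIntegral.integral_of_le h₂₁]
  calc _ ≤ ∫ t in τ₂..τ₁, K * σ / (2 * √(2 * π)) * (√t)⁻¹ :=
        intervalIntegral.integral_mono_on h₂₁
          (((continuousOn_diffusionRate hσ.ne' x).mono hpos).intervalIntegrable_of_Icc h₂₁)
          (((continuousOn_inv_sqrt.mono hpos).intervalIntegrable_of_Icc h₂₁).const_mul _)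
          fun t ht ↦ diffusionRate_le hσ.le hK (hpos ht)
    _ = K * σ / √(2 * π) * (√τ₁ - √τ₂) := by
        rw [intervalIntegral.integral_const_mul, integral_inv_sqrt h₂ h₂₁]; ring
    _ ≤ _ := by gcongr; exact sqrt_sub_sqrt_le_sqrt_sub h₂.le h₂₁

end TimeIncrements

lemma exists_weighted_wPut_sub_bounds {σ r K T : ℝ} (hσ : 0 < σ) (hr : 0 ≤ r) (hK : 0 < K)
    (hT : 0 < T) :
    ∃ M, 0 < M ∧ ∀ τ₁ τ₂, 0 < τ₂ → τ₂ ≤ τ₁ → τ₁ ≤ T → ∃ Ψ : ℝ → ℝ, Integrable Ψ ∧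
      ∫ x, Ψ x ≤ M * (τ₁ - τ₂) ∧ ∀ x,
        exp (min x 0) * |wPut σ r K τ₁ x - wPut σ r K τ₂ x| ≤ Ψ x ∧ Ψ x ≤ M * √(τ₁ - τ₂) := by
  set c := r * K * exp (r * T)
  have hc : 0 ≤ c := by positivity
  set M₁ := c * exp (σ ^ 2 * T / 2) * √T + K * σ / √(2 * π)
  set M₂ := c * (∫ x, driftWeight σ T x) + K * σ ^ 2 / 2
  refine ⟨max M₁ M₂, lt_max_of_lt_left (by positivity), fun τ₁ τ₂ h₂ h₂₁ h₁T ↦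
    ⟨fun x ↦ c * driftWeight σ T x * (τ₁ - τ₂) + ∫ t in Ioc τ₂ τ₁, diffusionRate σ r K t x,
      ?_, ?_, fun x ↦ ⟨exp_min_mul_abs_wPut_sub_le hσ hr hK.le h₂ h₂₁ h₁T x, ?_⟩⟩⟩
  · exact (((integrable_driftWeight hσ.ne' hT).const_mul c).mul_const _).add
      (integrable_integral_diffusionRate hσ hK.le h₂)
  · dsimp only
    rw [integral_add (((integrable_driftWeight hσ.ne' hT).const_mul c).mul_const _)
      (integrable_integral_diffusionRate hσ hK.le h₂), integral_mul_const,
      integral_const_mul, integral_integral_diffusionRate hσ hK.le h₂ h₂₁, ← add_mul]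
    exact mul_le_mul_of_nonneg_right (le_max_right _ _) (sub_nonneg.2 h₂₁)
  · have hΔ : τ₁ - τ₂ ≤ √T * √(τ₁ - τ₂) := by
      rw [← sqrt_mul hT.le]
      exact le_sqrt_of_sq_le (by nlinarith)
    calc c * driftWeight σ T x * (τ₁ - τ₂) + ∫ t in Ioc τ₂ τ₁, diffusionRate σ r K t x
        ≤ c * exp (σ ^ 2 * T / 2) * (τ₁ - τ₂) + K * σ / √(2 * π) * √(τ₁ - τ₂) := by
          gcongr
          · exact driftWeight_le hσ.ne' hT
          · exact integral_diffusionRate_le hσ hK.le h₂ h₂₁ x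
      _ ≤ M₁ * √(τ₁ - τ₂) := by
          have : 0 ≤ c * exp (σ ^ 2 * T / 2) := by positivity
          nlinarith
      _ ≤ max M₁ M₂ * √(τ₁ - τ₂) := by gcongr; exact le_max_left _ _

lemma rpow_integral_rpow_le_mul_rpow {α : Type*} [MeasurableSpace α] {μ : Measure α} {f g : α → ℝ}
    {p a b : ℝ} (hp : 1 ≤ p) (ha : 0 ≤ a) (hf : ∀ x, 0 ≤ f x) (hfa : ∀ x, f x ≤ a)
    (hfg : ∀ x, f x ≤ g x) (hg : Integrable g μ) (hgb : ∫ x, g x ∂μ ≤ b) :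
    (∫ x, f x ^ p ∂μ) ^ (1 / p) ≤ a ^ (1 - 1 / p) * b ^ (1 / p) := by
  have hp₀ : 0 < p := one_pos.trans_le hp
  have hb : 0 ≤ b := (integral_nonneg fun x ↦ (hf x).trans (hfg x)).trans hgb
  have hpt : ∀ x, f x ^ p ≤ a ^ (p - 1) * g x := by
    intro x
    rcases (hf x).eq_or_lt with h | h
    · rw [← h, zero_rpow hp₀.ne']
      exact mul_nonneg (rpow_nonneg ha _) (h ▸ hfg x)
    · calc f x ^ p = f x ^ (p - 1) * f x := by rw [rpow_sub_one h.ne', div_mul_cancel₀ _ h.ne']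
        _ ≤ a ^ (p - 1) * g x :=
          mul_le_mul (rpow_le_rpow (hf x) (hfa x) (by linarith)) (hfg x) h.le (rpow_nonneg ha _)
  have hint : ∫ x, f x ^ p ∂μ ≤ a ^ (p - 1) * b := calc
    ∫ x, f x ^ p ∂μ ≤ ∫ x, a ^ (p - 1) * g x ∂μ :=
      integral_mono_of_nonneg (Eventually.of_forall fun x ↦ rpow_nonneg (hf x) p)
        (hg.const_mul _) (Eventually.of_forall hpt)
    _ ≤ a ^ (p - 1) * b := by rw [integral_const_mul]; gcongr
  calc (∫ x, f x ^ p ∂μ) ^ (1 / p) ≤ (a ^ (p - 1) * b) ^ (1 / p) :=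
        rpow_le_rpow (integral_nonneg fun x ↦ rpow_nonneg (hf x) p) hint (by positivity)
    _ = a ^ (1 - 1 / p) * b ^ (1 / p) := by
        rw [mul_rpow (rpow_nonneg ha _) hb, ← rpow_mul ha]
        congr 2
        field_simp

lemma mul_sqrt_rpow_mul_mul_rpow {C δ p : ℝ} (hC : 0 ≤ C) (hδ : 0 ≤ δ) (hp : 0 < p) :
    (C * √δ) ^ (1 - 1 / p) * (C * δ) ^ (1 / p) = C * δ ^ ((p + 1) / (2 * p)) := calc
  _ = (C ^ (1 - 1 / p) * C ^ (1 / p)) * (δ ^ (1 / 2 * (1 - 1 / p)) * δ ^ (1 / p)) := by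
      rw [mul_rpow hC (sqrt_nonneg _), mul_rpow hC hδ, sqrt_eq_rpow, ← rpow_mul hδ]
      ring
  _ = C * δ ^ ((p + 1) / (2 * p)) := by
      have hexp : 1 / 2 * (1 - 1 / p) + 1 / p = (p + 1) / (2 * p) := by field_simp; ring
      rw [← rpow_add' hC (by simp), ← rpow_add' hδ (by rw [hexp]; positivity), hexp]
      simp

lemma abs_penaltyOp_sub_le {σ r K ε τ₁ τ₂ : ℝ} (hε : 0 ≤ ε) (U : ℝ → ℝ) (x : ℝ) :
    |penaltyOp σ r K ε τ₁ U x - penaltyOp σ r K ε τ₂ U x| ≤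
      ε⁻¹ * (exp (min x 0) * |wPut σ r K τ₁ x - wPut σ r K τ₂ x|) := by
  rw [penaltyOp, penaltyOp, ← mul_sub, abs_mul, abs_of_nonneg (by positivity), mul_assoc]
  gcongr ε⁻¹ * (_ * ?_)
  have := abs_max_sub_max_le_abs (wPut σ r K τ₁ x - U x) (wPut σ r K τ₂ x - U x) 0
  rwa [sub_sub_sub_cancel_right] at this

lemma exists_penaltyOp_holder_of_le {σ r K p T ε : ℝ} (hσ : 0 < σ) (hr : 0 ≤ r) (hK : 0 < K)
    (hp : 1 ≤ p) (hT : 0 < T) (hε : 0 < ε) :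
    ∃ C₀, 0 < C₀ ∧ ∀ U : ℝ → ℝ, ∀ τ₁ τ₂, 0 < τ₂ → τ₂ ≤ τ₁ → τ₁ ≤ T →
      (∫ x, |penaltyOp σ r K ε τ₁ U x - penaltyOp σ r K ε τ₂ U x| ^ p) ^ (1 / p) ≤
        ε⁻¹ * C₀ * (τ₁ - τ₂) ^ ((p + 1) / (2 * p)) := by
  obtain ⟨M, hM, hbounds⟩ := exists_weighted_wPut_sub_bounds hσ hr hK hT
  refine ⟨M, hM, fun U τ₁ τ₂ h₂ h₂₁ h₁T ↦ ?_⟩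
  obtain ⟨Ψ, hΨ, hΨM, hFΨ⟩ := hbounds τ₁ τ₂ h₂ h₂₁ h₁T
  have hεM : 0 ≤ ε⁻¹ * M := by positivity
  have hpen x := abs_penaltyOp_sub_le (σ := σ) (r := r) (K := K) (τ₁ := τ₁) (τ₂ := τ₂) hε.le U x
  rw [← mul_sqrt_rpow_mul_mul_rpow hεM (sub_nonneg.2 h₂₁) (one_pos.trans_le hp)]
  refine rpow_integral_rpow_le_mul_rpow hp (by positivity) (fun x ↦ abs_nonneg _) (fun x ↦ ?_)
    (fun x ↦ (hpen x).trans (by gcongr; exact (hFΨ x).1)) (hΨ.const_mul ε⁻¹) ?_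
  · calc _ ≤ _ := hpen x
      _ ≤ ε⁻¹ * (M * √(τ₁ - τ₂)) := by gcongr ε⁻¹ * ?_; exact (hFΨ x).1.trans (hFΨ x).2
      _ = _ := by ring
  · rw [integral_const_mul, mul_assoc]
    gcongr

/-- the penalty operator is Hölder continuous in `τ` with
exponent `(p+1)/(2p)`, uniformly in `U ∈ L^p`. -/
theorem penalty_operator_holder_in_time
    (σ r K p T ε : ℝ) (hσ : 0 < σ) (hr : 0 ≤ r) (hK : 0 < K)
    (hp : 1 ≤ p) (hT : 0 < T) (hε : 0 < ε) :
    ∃ C₀ : ℝ, 0 < C₀ ∧ ∀ U : ℝ → ℝ, ∀ τ₁ τ₂ : ℝ,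
      0 < τ₁ → τ₁ ≤ T → 0 < τ₂ → τ₂ ≤ T →
      (∫ x : ℝ, |penaltyOp σ r K ε τ₁ U x - penaltyOp σ r K ε τ₂ U x| ^ p) ^ (1 / p) ≤
        ε⁻¹ * C₀ * |τ₁ - τ₂| ^ ((p + 1) / (2 * p)) := by
  obtain ⟨C₀, hC₀, hholder⟩ := exists_penaltyOp_holder_of_le hσ hr hK hp hT hε
  refine ⟨C₀, hC₀, fun U τ₁ τ₂ h₁ h₁T h₂ h₂T ↦ ?_⟩
  rcases le_total τ₂ τ₁ with h | h
  · rw [abs_of_nonneg (sub_nonneg.2 h)]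
    exact hholder U τ₁ τ₂ h₂ h h₁T
  · simp_rw [abs_sub_comm (penaltyOp σ r K ε τ₁ U _), abs_sub_comm τ₁,
      abs_of_nonneg (sub_nonneg.2 h)]
    exact hholder U τ₂ τ₁ h₁ h h₂T
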